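/- arXiv:2504.11997 — 9 statements merged into one kernel-verified Lean document; each statement's English description precedes it below -/
import Mathlib

section
/- For every dimension d ≥ 2, every Δ > 0, and every even n = 2m with m ≥ 1, there exist vectors φ₁, …, φₙ ∈ ℝ^d with ‖φᵢ‖₂ ≤ 1 for all i, reals y₁, …, yₙ with |yᵢ| ≤ Δ for all i, and a vector φ ∈ ℝ^d with ‖φ‖₂ ≤ 1, such that |⟨wₙ, φ⟩| ≥ (1/2)·Δ·√n, where Λₙ = Σᵢ₌₁ⁿ φᵢφᵢᵀ + I is the regularized Gram matrix (with regularization λ = 1) and wₙ = Λₙ⁻¹ Σᵢ₌₁ⁿ yᵢφᵢ is the ridge-regression coefficient. -/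
/-!
Take all `n` data points equal to `e₀ / √n`, with responses `Δ`. Then `Λₙ = I + e₀ e₀ᵀ` does not
grow with `n`, while `Σ yᵢ φᵢ = Δ √n e₀` does; as `e₀` is an eigenvector of `Λₙ` with eigenvalue
`2`, `wₙ = (Δ √n / 2) e₀`, and testing against `φ = e₀` gives the bound.
-/

open Matrix Finset

noncomputable def ridgeEstimate {ι : Type*} [Fintype ι] [DecidableEq ι] {n : ℕ}
    (φs : Fin n → ι → ℝ) (y : Fin n → ℝ) : ι → ℝ :=
  ((∑ i, vecMulVec (φs i) (φs i)) + 1)⁻¹ *ᵥ ∑ i, y i • φs i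

theorem nsmul_vecMulVec_self {ι : Type*} (n : ℕ) (u : ι → ℝ) :
    n • vecMulVec u u = vecMulVec (√n • u) (√n • u) := by
  rw [smul_vecMulVec, vecMulVec_smul, smul_smul, Real.mul_self_sqrt n.cast_nonneg,
    Nat.cast_smul_eq_nsmul]

section

variable {ι : Type*} [Fintype ι] [DecidableEq ι]

theorem Matrix.one_add_vecMulVec_self_inv_mulVec_self {K : Type*} [Field K] (u : ι → K)
    (hu : 1 + u ⬝ᵥ u ≠ 0) : (1 + vecMulVec u u)⁻¹ *ᵥ u = (1 + u ⬝ᵥ u)⁻¹ • u := by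
  have hdet : (1 + vecMulVec u u).det = 1 + u ⬝ᵥ u := by
    rw [vecMulVec_eq Unit, det_one_add_replicateCol_mul_replicateRow]
  let _ := invertibleOfIsUnitDet _ (hdet ▸ hu.isUnit)
  refine inv_mulVec_eq_vec ?_
  rw [add_mulVec, one_mulVec, vecMulVec_mulVec, op_smul_eq_smul, dotProduct_smul, smul_eq_mul,
    ← add_smul, ← mul_one_add, inv_mul_cancel₀ hu, one_smul]

theorem sqrt_sum_pi_single_sq (i : ι) (a : ℝ) :
    √(∑ j, (Pi.single i a : ι → ℝ) j ^ 2) = |a| := by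
  simp [Pi.single_apply, Real.sqrt_sq_eq_abs]

theorem ridgeEstimate_const_single {n : ℕ} (hn : 0 < n) (i₀ : ι) (Δ : ℝ) :
    ridgeEstimate (fun _ : Fin n => Pi.single i₀ (√n)⁻¹) (fun _ => Δ) =
      Pi.single i₀ (Δ * √n / 2) := by
  have hs : √(n : ℝ) ≠ 0 := by positivity
  set e : ι → ℝ := Pi.single i₀ 1
  have he : e ⬝ᵥ e = 1 := by simp [e]
  have hsingle (a : ℝ) : Pi.single i₀ a = a • e := by
    rw [← Pi.single_smul', smul_eq_mul, mul_one]
  have hgram : ∑ _i : Fin n, vecMulVec ((√n)⁻¹ • e) ((√n)⁻¹ • e) = vecMulVec e e := by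
    rw [sum_const, card_univ, Fintype.card_fin, nsmul_vecMulVec_self, smul_smul,
      mul_inv_cancel₀ hs, one_smul]
  have hmoment : ∑ _i : Fin n, Δ • (√n)⁻¹ • e = (Δ * √n) • e := by
    rw [sum_const, card_univ, Fintype.card_fin, ← Nat.cast_smul_eq_nsmul ℝ, smul_smul, smul_smul]
    congr 1
    field_simp
    rw [Real.sq_sqrt n.cast_nonneg, mul_comm]
  simp only [hsingle]
  rw [ridgeEstimate, hgram, hmoment, add_comm, mulVec_smul,
    one_add_vecMulVec_self_inv_mulVec_self e (by norm_num [he]), he, smul_smul,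
    one_add_one_eq_two, div_eq_mul_inv]

end

theorem stmt_0_general (d : ℕ) (hd : 2 ≤ d) (Δ : ℝ) (hΔ : 0 < Δ)
    (n : ℕ) :
    ∃ (φs : Fin n → (Fin d → ℝ)) (y : Fin n → ℝ) (φ : Fin d → ℝ),
      (∀ i, Real.sqrt (∑ j, φs i j ^ 2) ≤ 1) ∧
      (∀ i, |y i| ≤ Δ) ∧
      Real.sqrt (∑ j, φ j ^ 2) ≤ 1 ∧
      (1 / 2) * Δ * Real.sqrt n ≤
        |((((∑ i, vecMulVec (φs i) (φs i)) + (1 : Matrix (Fin d) (Fin d) ℝ))⁻¹ *ᵥ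
            (∑ i, y i • φs i)) ⬝ᵥ φ)| := by
  have : NeZero d := ⟨by omega⟩
  refine ⟨fun _ => Pi.single 0 (√n)⁻¹, fun _ => Δ, Pi.single 0 1, fun i => ?_,
    fun _ => (abs_of_pos hΔ).le, ?_, ?_⟩
  · rw [sqrt_sum_pi_single_sq, abs_inv, abs_of_nonneg (Real.sqrt_nonneg _)]
    exact inv_le_one_of_one_le₀ (Real.one_le_sqrt.mpr (mod_cast i.pos))
  · rw [sqrt_sum_pi_single_sq, abs_one]
  rcases n.eq_zero_or_pos with rfl | hn
  · simp
  change _ ≤ |ridgeEstimate _ _ ⬝ᵥ _|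
  rw [ridgeEstimate_const_single hn, single_dotProduct, Pi.single_eq_same, mul_one,
    abs_of_nonneg (by positivity)]
  exact le_of_eq (by ring)

/-- For every dimension `d ≥ 2`, every `Δ > 0`, and every even `n = 2m` with `m ≥ 1`,
there exist vectors `φ₁, …, φₙ ∈ ℝ^d` with `‖φᵢ‖₂ ≤ 1`, reals `y₁, …, yₙ` with `|yᵢ| ≤ Δ`,
and a vector `φ` with `‖φ‖₂ ≤ 1`, such that `|⟨wₙ, φ⟩| ≥ (1/2)·Δ·√n`, where
`Λₙ = Σᵢ φᵢφᵢᵀ + I` and `wₙ = Λₙ⁻¹ Σᵢ yᵢφᵢ`. -/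
theorem stmt_0 (d : ℕ) (hd : 2 ≤ d) (Δ : ℝ) (hΔ : 0 < Δ) (m : ℕ) (hm : 1 ≤ m)
    (n : ℕ) (hn : n = 2 * m) :
    ∃ (φs : Fin n → (Fin d → ℝ)) (y : Fin n → ℝ) (φ : Fin d → ℝ),
      (∀ i, Real.sqrt (∑ j, φs i j ^ 2) ≤ 1) ∧
      (∀ i, |y i| ≤ Δ) ∧
      Real.sqrt (∑ j, φ j ^ 2) ≤ 1 ∧
      (1 / 2) * Δ * Real.sqrt n ≤
        |((((∑ i, vecMulVec (φs i) (φs i)) + (1 : Matrix (Fin d) (Fin d) ℝ))⁻¹ *ᵥ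
            (∑ i, y i • φs i)) ⬝ᵥ φ)| :=
  stmt_0_general d hd Δ hΔ n
end

section
/- Let X be a nonempty set, A a nonempty finite set, and let Q̃₁, Q̃₂, Q̃₃, Q̃₄ : X × A → ℝ and reals m₁ ≥ m₂ ≥ m₃ ≥ m₄ be given. Define U₃ = min(Q̃₂, Q̃₁) and L₃ = max(Q̃₂ − m₂ + m₃, Q̃₁ − m₁ + m₃) pointwise, Q₃ = Clip(Q̃₃; L₃, U₃) pointwise; and define U₄ = min(Q̃₃, Q̃₂) and L₄ = max(Q̃₃ − m₃ + m₄, Q̃₂ − m₂ + m₄) pointwise, Q₄ = Clip(Q̃₄; L₄, U₄) pointwise. Assume the clipping intervals are nonempty, i.e., L₃(x,a) ≤ U₃(x,a) and L₄(x,a) ≤ U₄(x,a) for all (x,a) ∈ X × A. Let Ṽ₃(x) = max_{a∈A} Q₃(x,a) and Ṽ₄(x) = max_{a∈A} Q₄(x,a). Then for every x ∈ X, |Ṽ₄(x) − Ṽ₃(x)| ≤ m₂ − m₄. -/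
open Finset

/-- `Clip(x; L, U) = min (max x L) U`. -/
noncomputable def clip (x L U : ℝ) : ℝ := min (max x L) U

lemma clip_mem {x L U : ℝ} (h : L ≤ U) : L ≤ clip x L U ∧ clip x L U ≤ U := by
  unfold clip
  constructor
  · exact le_min (le_max_right _ _) h
  · exact min_le_right _ _

/-- Deviation-control property of the clipped value-iteration scheme: given unclipped
action-value functions `Q̃₁, Q̃₂, Q̃₃, Q̃₄` at four consecutive time steps with nonincreasing
clipping thresholds `m₁ ≥ m₂ ≥ m₃ ≥ m₄`, the clipped functions
`Q₃ = Clip(Q̃₃; max(Q̃₂ − m₂ + m₃, Q̃₁ − m₁ + m₃), min(Q̃₂, Q̃₁))` and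
`Q₄ = Clip(Q̃₄; max(Q̃₃ − m₃ + m₄, Q̃₂ − m₂ + m₄), min(Q̃₃, Q̃₂))` (with nonempty clipping
intervals) have maximal action-values `Ṽ₃, Ṽ₄` satisfying `|Ṽ₄(x) − Ṽ₃(x)| ≤ m₂ − m₄`. -/
theorem stmt_1 {X A : Type*} [Nonempty X] [Fintype A] [Nonempty A]
    (Q1 Q2 Q3 Q4 : X → A → ℝ) (m1 m2 m3 m4 : ℝ)
    (h12 : m2 ≤ m1) (h23 : m3 ≤ m2) (h34 : m4 ≤ m3)
    (hLU3 : ∀ x a, max (Q2 x a - m2 + m3) (Q1 x a - m1 + m3) ≤ min (Q2 x a) (Q1 x a))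
    (hLU4 : ∀ x a, max (Q3 x a - m3 + m4) (Q2 x a - m2 + m4) ≤ min (Q3 x a) (Q2 x a)) :
    ∀ x : X,
      |(Finset.univ.sup' Finset.univ_nonempty (fun a =>
          clip (Q4 x a) (max (Q3 x a - m3 + m4) (Q2 x a - m2 + m4))
            (min (Q3 x a) (Q2 x a)))) -
       (Finset.univ.sup' Finset.univ_nonempty (fun a =>
          clip (Q3 x a) (max (Q2 x a - m2 + m3) (Q1 x a - m1 + m3))
            (min (Q2 x a) (Q1 x a))))| ≤ m2 - m4 := by
  intro x
  set f : A → ℝ := fun a =>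
    clip (Q4 x a) (max (Q3 x a - m3 + m4) (Q2 x a - m2 + m4)) (min (Q3 x a) (Q2 x a)) with hf
  set g : A → ℝ := fun a =>
    clip (Q3 x a) (max (Q2 x a - m2 + m3) (Q1 x a - m1 + m3)) (min (Q2 x a) (Q1 x a)) with hg
  have hfb : ∀ a, Q2 x a - m2 + m4 ≤ f a ∧ f a ≤ Q2 x a := by
    intro a
    obtain ⟨h1, h2⟩ := clip_mem (x := Q4 x a) (hLU4 x a)
    exact ⟨le_trans (le_max_right _ _) h1, le_trans h2 (min_le_right _ _)⟩
  have hgb : ∀ a, Q2 x a - m2 + m3 ≤ g a ∧ g a ≤ Q2 x a := by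
    intro a
    obtain ⟨h1, h2⟩ := clip_mem (x := Q3 x a) (hLU3 x a)
    exact ⟨le_trans (le_max_left _ _) h1, le_trans h2 (min_le_left _ _)⟩
  rw [abs_sub_le_iff]
  constructor
  · rw [sub_le_iff_le_add]
    apply Finset.sup'_le
    intro a _
    have : f a ≤ g a + (m2 - m4) := by
      have h1 := (hfb a).2
      have h2 := (hgb a).1
      linarith
    exact this.trans (by
      have := Finset.le_sup' g (Finset.mem_univ a)
      linarith)
  · rw [sub_le_iff_le_add]
    apply Finset.sup'_le
    intro a _
    have : g a ≤ f a + (m2 - m4) := by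
      have h1 := (hgb a).2
      have h2 := (hfb a).1
      linarith
    exact this.trans (by
      have := Finset.le_sup' f (Finset.mem_univ a)
      linarith)
end

section
/- Let H ≥ 0 and let m₂ ≥ m₃ ≥ m₄ be reals. If x, y ∈ ℝ satisfy |y − x| ≤ m₂ − m₄, then |Clip(y; m₄, m₄ + H) − Clip(x; m₃, m₃ + H)| ≤ m₂ − m₄. -/
/-- Second claim of the deviation-control lemma: for `H ≥ 0` and nonincreasing thresholds
`m₂ ≥ m₃ ≥ m₄`, if `|y − x| ≤ m₂ − m₄` then
`|Clip(y; m₄, m₄ + H) − Clip(x; m₃, m₃ + H)| ≤ m₂ − m₄`. -/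
theorem stmt_2 (H : ℝ) (hH : 0 ≤ H) (m2 m3 m4 : ℝ) (h23 : m3 ≤ m2) (h34 : m4 ≤ m3)
    (x y : ℝ) (hxy : |y - x| ≤ m2 - m4) :
    |clip y m4 (m4 + H) - clip x m3 (m3 + H)| ≤ m2 - m4 := by
  unfold clip
  rw [abs_le] at hxy ⊢
  obtain ⟨h1, h2⟩ := hxy
  constructor <;> simp only [min_def, max_def] <;> split_ifs <;> linarith
end

section
/- Let S be a finite nonempty set and A a finite nonempty set. Let p : S × A × S → ℝ satisfy p(s' | s, a) ≥ 0 and Σ_{s'∈S} p(s' | s, a) ≤ 1 for all (s,a) (a subprobability kernel). Let r : S × A → ℝ, b : S × A → ℝ, γ ∈ [0, 1), M ∈ ℝ, H ≥ 0, and reals m₁ ≥ m₂. Suppose V₁, V₂ : S → ℝ satisfy |V₁(s) − V₂(s)| ≤ m₁ − m₂ for all s. Define, for i ∈ {1,2}, Qᵢ(s,a) = min( r(s,a) + γ( Σ_{s'} p(s'|s,a) Vᵢ(s') + b(s,a) ), M ), Ṽᵢ(s) = max_{a∈A} Qᵢ(s,a), and Vᵢ'(s) = Clip(Ṽᵢ(s);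 mᵢ, mᵢ + H). Then |Ṽ₁(s) − Ṽ₂(s)| ≤ m₁ − m₂ and |V₁'(s) − V₂'(s)| ≤ m₁ − m₂ for all s ∈ S. -/
open Finset

lemma sup'_abs_sub_le {A : Type*} (s : Finset A) (hs : s.Nonempty) (f g : A → ℝ) (d : ℝ)
    (h : ∀ a ∈ s, |f a - g a| ≤ d) :
    |s.sup' hs f - s.sup' hs g| ≤ d := by
  rw [abs_sub_le_iff]
  constructor
  · rw [sub_le_iff_le_add]
    apply Finset.sup'_le
    intro a ha
    have h1 := (abs_sub_le_iff.mp (h a ha)).1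
    have h2 : g a ≤ s.sup' hs g := Finset.le_sup' g ha
    linarith
  · rw [sub_le_iff_le_add]
    apply Finset.sup'_le
    intro a ha
    have h1 := (abs_sub_le_iff.mp (h a ha)).2
    have h2 : f a ≤ s.sup' hs f := Finset.le_sup' f ha
    linarith

lemma clip_diff (x y m1 m2 H : ℝ) (hH : 0 ≤ H) (hm : m2 ≤ m1)
    (hxy : |x - y| ≤ m1 - m2) :
    |clip x m1 (m1 + H) - clip y m2 (m2 + H)| ≤ m1 - m2 := by
  obtain ⟨h1, h2⟩ := abs_le.mp hxy
  unfold clip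
  rcases max_cases x m1 with ⟨e1, i1⟩ | ⟨e1, i1⟩ <;>
    rcases max_cases y m2 with ⟨e2, i2⟩ | ⟨e2, i2⟩ <;>
    rcases min_cases (x ⊔ m1) (m1 + H) with ⟨f1, j1⟩ | ⟨f1, j1⟩ <;>
    rcases min_cases (y ⊔ m2) (m2 + H) with ⟨f2, j2⟩ | ⟨f2, j2⟩ <;>
    rw [abs_le] <;> constructor <;> linarith [f1, f2, e1, e2]

/-- In the tabular setting with a subprobability kernel `p`, one step of optimistic clipped
value iteration with clipping thresholds `m₁ ≥ m₂` preserves the bound `m₁ − m₂` on the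
deviation between two value-function sequences: if `|V₁(s) − V₂(s)| ≤ m₁ − m₂` for all `s`,
then with `Qᵢ(s,a) = min(r(s,a) + γ(Σ_{s'} p(s'|s,a)Vᵢ(s') + b(s,a)), M)`,
`Ṽᵢ(s) = max_a Qᵢ(s,a)` and `Vᵢ'(s) = Clip(Ṽᵢ(s); mᵢ, mᵢ + H)`, we have
`|Ṽ₁(s) − Ṽ₂(s)| ≤ m₁ − m₂` and `|V₁'(s) − V₂'(s)| ≤ m₁ − m₂` for all `s`. -/
theorem stmt_3 {S A : Type*} [Fintype S] [Nonempty S] [Fintype A] [Nonempty A]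
    (p : S → A → S → ℝ) (hp0 : ∀ s a s', 0 ≤ p s a s') (hp1 : ∀ s a, ∑ s', p s a s' ≤ 1)
    (r b : S → A → ℝ) (γ : ℝ) (hγ : γ ∈ Set.Ico (0 : ℝ) 1) (M : ℝ)
    (H : ℝ) (hH : 0 ≤ H) (m1 m2 : ℝ) (hm : m2 ≤ m1)
    (V1 V2 : S → ℝ) (hV : ∀ s, |V1 s - V2 s| ≤ m1 - m2) :
    (∀ s : S,
      |(Finset.univ.sup' Finset.univ_nonempty (fun a =>
          min (r s a + γ * ((∑ s', p s a s' * V1 s') + b s a)) M)) -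
       (Finset.univ.sup' Finset.univ_nonempty (fun a =>
          min (r s a + γ * ((∑ s', p s a s' * V2 s') + b s a)) M))| ≤ m1 - m2) ∧
    (∀ s : S,
      |clip (Finset.univ.sup' Finset.univ_nonempty (fun a =>
          min (r s a + γ * ((∑ s', p s a s' * V1 s') + b s a)) M)) m1 (m1 + H) -
       clip (Finset.univ.sup' Finset.univ_nonempty (fun a =>
          min (r s a + γ * ((∑ s', p s a s' * V2 s') + b s a)) M)) m2 (m2 + H)| ≤ m1 - m2) := by
  obtain ⟨hγ0, hγ1⟩ := hγ
  have hd : 0 ≤ m1 - m2 := by linarith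
  have hsup : ∀ s : S,
      |(Finset.univ.sup' Finset.univ_nonempty (fun a =>
          min (r s a + γ * ((∑ s', p s a s' * V1 s') + b s a)) M)) -
       (Finset.univ.sup' Finset.univ_nonempty (fun a =>
          min (r s a + γ * ((∑ s', p s a s' * V2 s') + b s a)) M))| ≤ m1 - m2 := by
    intro s
    apply sup'_abs_sub_le
    intro a _
    have hinner : |(∑ s', p s a s' * V1 s') - (∑ s', p s a s' * V2 s')| ≤ m1 - m2 := by
      rw [← Finset.sum_sub_distrib]
      calc |∑ s', (p s a s' * V1 s' - p s a s' * V2 s')|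
          ≤ ∑ s', |p s a s' * V1 s' - p s a s' * V2 s'| := Finset.abs_sum_le_sum_abs _ _
        _ = ∑ s', p s a s' * |V1 s' - V2 s'| := by
            apply Finset.sum_congr rfl
            intro s' _
            rw [← mul_sub, abs_mul, abs_of_nonneg (hp0 s a s')]
        _ ≤ ∑ s', p s a s' * (m1 - m2) := by
            apply Finset.sum_le_sum
            intro s' _
            exact mul_le_mul_of_nonneg_left (hV s') (hp0 s a s')
        _ = (∑ s', p s a s') * (m1 - m2) := by rw [Finset.sum_mul]
        _ ≤ 1 * (m1 - m2) := mul_le_mul_of_nonneg_right (hp1 s a) hd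
        _ = m1 - m2 := one_mul _
    have habs : |(r s a + γ * ((∑ s', p s a s' * V1 s') + b s a)) -
        (r s a + γ * ((∑ s', p s a s' * V2 s') + b s a))| ≤ m1 - m2 := by
      have : (r s a + γ * ((∑ s', p s a s' * V1 s') + b s a)) -
          (r s a + γ * ((∑ s', p s a s' * V2 s') + b s a)) =
          γ * ((∑ s', p s a s' * V1 s') - (∑ s', p s a s' * V2 s')) := by ring
      rw [this, abs_mul, abs_of_nonneg hγ0]
      calc γ * |(∑ s', p s a s' * V1 s') - (∑ s', p s a s' * V2 s')|
          ≤ 1 * (m1 - m2) := by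
            apply mul_le_mul (le_of_lt hγ1) hinner (abs_nonneg _) zero_le_one
        _ = m1 - m2 := one_mul _
    calc |min (r s a + γ * ((∑ s', p s a s' * V1 s') + b s a)) M -
          min (r s a + γ * ((∑ s', p s a s' * V2 s') + b s a)) M|
        ≤ max |(r s a + γ * ((∑ s', p s a s' * V1 s') + b s a)) -
            (r s a + γ * ((∑ s', p s a s' * V2 s') + b s a))| |M - M| :=
          abs_min_sub_min_le_max _ _ _ _
      _ ≤ m1 - m2 := by
          rw [sub_self, abs_zero]
          exact max_le habs hd
  refine ⟨hsup, fun s => clip_diff _ _ _ _ _ hH hm (hsup s)⟩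
end

section
/- Let x₁, …, xₙ ∈ ℝ^d with ‖xᵢ‖₂ ≤ 1 for all i, let y₁, …, yₙ ∈ [0, B] for some B ≥ 0, and let λ > 0. Let Λ = Σᵢ₌₁ⁿ xᵢxᵢᵀ + λI and w = Λ⁻¹ Σᵢ₌₁ⁿ xᵢyᵢ be the ridge-regression coefficient. Then ‖w‖₂ ≤ B√(dn/λ). -/
/-!
Write `A = Σᵢ xᵢxᵢᵀ`, `Λ = A + λI` and `b = Σᵢ yᵢxᵢ`, so that `Λw = b`. Since `A ⪰ 0`,
`λ‖w‖² ≤ wᵀΛw = bᵀΛ⁻¹b`. Cauchy–Schwarz for the semidefinite form `Λ⁻¹` bounds this by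
`(Σᵢ yᵢ²) Σᵢ xᵢᵀΛ⁻¹xᵢ`, and `Σᵢ xᵢᵀΛ⁻¹xᵢ = tr(Λ⁻¹A) = d - λ tr Λ⁻¹ ≤ d`. Hence `λ‖w‖² ≤ nB²d`.
-/

open Matrix Finset

namespace Matrix

section

variable {m ι : Type*} [Fintype m] [Fintype ι]

lemma dotProduct_sum_vecMulVec_self_mulVec (a : ι → m → ℝ) (u v : m → ℝ) :
    u ⬝ᵥ ((∑ k, vecMulVec (a k) (a k)) *ᵥ v) = ∑ k, (u ⬝ᵥ a k) * (a k ⬝ᵥ v) := by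
  simp only [sum_mulVec, dotProduct_sum, vecMulVec_mulVec, dotProduct_smul, op_smul_eq_smul,
    smul_eq_mul, mul_comm]

lemma trace_mul_sum_vecMulVec_self (M : Matrix m m ℝ) (x : ι → m → ℝ) :
    trace (M * ∑ i, vecMulVec (x i) (x i)) = ∑ i, x i ⬝ᵥ (M *ᵥ x i) := by
  simp only [Matrix.mul_sum, trace_sum, trace_mul_comm M, vecMulVec_mul, trace_vecMulVec,
    dotProduct_mulVec]
  exact sum_congr rfl fun i _ => dotProduct_comm _ _

lemma PosSemidef.sum_smul_dotProduct_mulVec_le {M : Matrix m m ℝ} (hM : M.PosSemidef)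
    (y : ι → ℝ) (x : ι → m → ℝ) :
    (∑ i, y i • x i) ⬝ᵥ (M *ᵥ ∑ i, y i • x i) ≤ (∑ i, y i ^ 2) * ∑ i, x i ⬝ᵥ (M *ᵥ x i) := by
  obtain ⟨r, a, rfl⟩ := posSemidef_iff_eq_sum_vecMulVec.mp hM
  simp only [star_trivial, dotProduct_sum_vecMulVec_self_mulVec, dotProduct_comm _ (a _),
    ← sq, dotProduct_sum, dotProduct_smul, smul_eq_mul]
  rw [Finset.sum_comm, Finset.mul_sum]
  exact sum_le_sum fun k _ => sum_mul_sq_le_sq_mul_sq _ _ _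

end

variable {m : Type*} [DecidableEq m]

lemma PosSemidef.posDef_add_smul_one {A : Matrix m m ℝ} (hA : A.PosSemidef) {lam : ℝ}
    (hlam : 0 < lam) : (A + lam • 1).PosDef :=
  PosDef.posSemidef_add hA (PosDef.one.smul hlam)

variable [Fintype m]

lemma PosSemidef.mul_dotProduct_self_le_dotProduct_add_smul_one_mulVec {A : Matrix m m ℝ}
    (hA : A.PosSemidef) (lam : ℝ) (w : m → ℝ) :
    lam * (w ⬝ᵥ w) ≤ w ⬝ᵥ ((A + lam • 1) *ᵥ w) := by
  have hwAw := hA.dotProduct_mulVec_nonneg w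
  rw [star_trivial] at hwAw
  rw [add_mulVec, dotProduct_add, smul_mulVec, one_mulVec, dotProduct_smul, smul_eq_mul]
  linarith

lemma PosSemidef.trace_inv_add_smul_one_mul_le {A : Matrix m m ℝ} (hA : A.PosSemidef) {lam : ℝ}
    (hlam : 0 < lam) : trace ((A + lam • 1)⁻¹ * A) ≤ Fintype.card m := by
  set Λ := A + lam • 1
  have hΛ : Λ.PosDef := hA.posDef_add_smul_one hlam
  have hsplit : Λ⁻¹ * A + lam • Λ⁻¹ = 1 := by
    rw [← nonsing_inv_mul Λ ((isUnit_iff_isUnit_det _).mp hΛ.isUnit), Matrix.mul_add,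
      Matrix.mul_smul, Matrix.mul_one]
  have htrace := congrArg trace hsplit
  rw [trace_add, trace_smul, trace_one, smul_eq_mul] at htrace
  linarith [mul_nonneg hlam.le hΛ.posSemidef.inv.trace_nonneg]

end Matrix

theorem ridge_coeff_mul_dotProduct_self_le {m ι : Type*} [Fintype m] [DecidableEq m] [Fintype ι]
    (x : ι → m → ℝ) (y : ι → ℝ) {lam : ℝ} (hlam : 0 < lam) :
    lam * (((∑ i, vecMulVec (x i) (x i) + lam • 1)⁻¹ *ᵥ ∑ i, y i • x i) ⬝ᵥ
        ((∑ i, vecMulVec (x i) (x i) + lam • 1)⁻¹ *ᵥ ∑ i, y i • x i)) ≤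
      (∑ i, y i ^ 2) * Fintype.card m := by
  set A := ∑ i, vecMulVec (x i) (x i)
  set b := ∑ i, y i • x i
  have hA : A.PosSemidef := posSemidef_sum _ fun i _ => posSemidef_vecMulVec_self_star (x i)
  have hΛ : (A + lam • 1).PosDef := hA.posDef_add_smul_one hlam
  set w := (A + lam • 1)⁻¹ *ᵥ b
  have hΛw : (A + lam • 1) *ᵥ w = b := by
    rw [mulVec_mulVec, mul_nonsing_inv _ ((isUnit_iff_isUnit_det _).mp hΛ.isUnit), one_mulVec]
  calc lam * (w ⬝ᵥ w)
      ≤ w ⬝ᵥ ((A + lam • 1) *ᵥ w) := hA.mul_dotProduct_self_le_dotProduct_add_smul_one_mulVec lam w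
    _ = b ⬝ᵥ ((A + lam • 1)⁻¹ *ᵥ b) := by rw [hΛw, dotProduct_comm]
    _ ≤ (∑ i, y i ^ 2) * ∑ i, x i ⬝ᵥ ((A + lam • 1)⁻¹ *ᵥ x i) :=
        hΛ.posSemidef.inv.sum_smul_dotProduct_mulVec_le y x
    _ = (∑ i, y i ^ 2) * trace ((A + lam • 1)⁻¹ * A) := by rw [trace_mul_sum_vecMulVec_self]
    _ ≤ (∑ i, y i ^ 2) * Fintype.card m :=
        mul_le_mul_of_nonneg_left (hA.trace_inv_add_smul_one_mul_le hlam)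
          (sum_nonneg fun i _ => sq_nonneg _)

theorem stmt_5_general (d n : ℕ) (x : Fin n → Fin d → ℝ)
    (B : ℝ) (hB : 0 ≤ B) (y : Fin n → ℝ) (hy : ∀ i, y i ∈ Set.Icc 0 B)
    (lam : ℝ) (hlam : 0 < lam) :
    Real.sqrt (∑ j, ((((∑ i, vecMulVec (x i) (x i)) + lam • (1 : Matrix (Fin d) (Fin d) ℝ))⁻¹ *ᵥ
        (∑ i, y i • x i)) j) ^ 2) ≤ B * Real.sqrt (d * n / lam) := by
  set w := ((∑ i, vecMulVec (x i) (x i)) + lam • (1 : Matrix (Fin d) (Fin d) ℝ))⁻¹ *ᵥ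
    ∑ i, y i • x i
  have hw : lam * (w ⬝ᵥ w) ≤ (∑ i, y i ^ 2) * d := by
    simpa using ridge_coeff_mul_dotProduct_self_le x y hlam
  have hy_sq : ∑ i, y i ^ 2 ≤ n * B ^ 2 := by
    simpa using sum_le_sum fun i (_ : i ∈ univ) => pow_le_pow_left₀ (hy i).1 (hy i).2 2
  have hw_sq : ∑ j, w j ^ 2 ≤ B ^ 2 * (d * n / lam) := by
    rw [mul_div_assoc', le_div_iff₀ hlam]
    simp only [dotProduct, ← sq] at hw
    linarith [mul_le_mul_of_nonneg_right hy_sq (Nat.cast_nonneg' d)]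
  calc Real.sqrt (∑ j, w j ^ 2) ≤ Real.sqrt (B ^ 2 * (d * n / lam)) := Real.sqrt_le_sqrt hw_sq
    _ = B * Real.sqrt (d * n / lam) := by rw [Real.sqrt_mul (sq_nonneg B), Real.sqrt_sq hB]

/-- Norm bound for the ridge-regression coefficient: if `‖xᵢ‖₂ ≤ 1`, `yᵢ ∈ [0, B]` and
`λ > 0`, then `w = Λ⁻¹ Σᵢ xᵢyᵢ` with `Λ = Σᵢ xᵢxᵢᵀ + λI` satisfies `‖w‖₂ ≤ B√(dn/λ)`. -/
theorem stmt_5 (d n : ℕ) (x : Fin n → Fin d → ℝ)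
    (hx : ∀ i, Real.sqrt (∑ j, x i j ^ 2) ≤ 1)
    (B : ℝ) (hB : 0 ≤ B) (y : Fin n → ℝ) (hy : ∀ i, y i ∈ Set.Icc 0 B)
    (lam : ℝ) (hlam : 0 < lam) :
    Real.sqrt (∑ j, ((((∑ i, vecMulVec (x i) (x i)) + lam • (1 : Matrix (Fin d) (Fin d) ℝ))⁻¹ *ᵥ
        (∑ i, y i • x i)) j) ^ 2) ≤ B * Real.sqrt (d * n / lam) :=
  stmt_5_general d n x B hB y hy lam hlam
end

section
/- Let S be a nonempty set, A a nonempty set, d ≥ 1, and φ : S × A → ℝ^d a map with ‖φ(s,a)‖₂ ≤ 1 for all (s,a). Fix constants M > 0, L > 0, B > 0, D > 0, λ > 0 and ε > 0. Let 𝒬 be the class of all functions Q : S × A → ℝ of the form Q(s,a) = min( wᵀφ(s,a) + v + β·√(φ(s,a)ᵀ Λ⁻¹ φ(s,a)), M ) where the parameters range over all w ∈ ℝ^d with ‖w‖₂ ≤ L, all β ∈ [0, B], all v ∈ [0, D], and all symmetric positive definite d×d matrices Λ whose minimum eigenvalue is at least λ. Then there exists a finite set C of functions from S × A to ℝ such that: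 every Q ∈ 𝒬 has some Q' ∈ C with sup_{(s,a)} |Q(s,a) − Q'(s,a)| ≤ ε, and log|C| ≤ d·log(1 + 8L/ε) + log(1 + 8D/ε) + d²·log(1 + 8√d·B²/(λε²)). -/
/-!
Writing the bonus as `β √(φᵀ Λ⁻¹ φ) = √(φᵀ (β² Λ⁻¹) φ)`, every `Q` in the class is determined by
a triple `(w, v, Γ)` with `‖w‖₂ ≤ L`, `v ∈ [0, D]` and `Γ = β² Λ⁻¹` of Frobenius norm at most
`√d B² / λ` (each column of `Λ⁻¹` has length at most `1 / λ`). Since `‖φ‖₂ ≤ 1`, the map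
`(w, v, Γ) ↦ Q` satisfies `‖Q - Q'‖_∞ ≤ ‖w - w'‖ + |v - v'| + √‖Γ - Γ'‖_F`, so nets of mesh
`ε / 4`, `ε / 4` and `ε² / 4` in the three parameter balls give an `ε`-cover. A maximal separated
subset of a ball of radius `R` in a `k`-dimensional normed space is an `r`-net of size at most
`(1 + 2R / r) ^ k` by comparing volumes, which yields the three logarithmic terms.
-/

open Matrix Metric MeasureTheory WithLp
open scoped NNReal ENNReal

attribute [local instance] Matrix.frobeniusNormedAddCommGroup Matrix.frobeniusNormedSpace

theorem Real.abs_sqrt_sub_sqrt_le (a b : ℝ) : |√a - √b| ≤ √|a - b| := by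
  wlog hba : b ≤ a generalizing a b
  · rw [abs_sub_comm, abs_sub_comm a]
    exact this b a (le_of_not_ge hba)
  rw [abs_of_nonneg (sub_nonneg.2 (Real.sqrt_le_sqrt hba)), abs_of_nonneg (sub_nonneg.2 hba),
    sub_le_iff_le_add, Real.sqrt_le_left (by positivity)]
  have hb : b ≤ √b ^ 2 := by
    rcases le_total 0 b with hb | hb
    · rw [Real.sq_sqrt hb]
    · exact hb.trans (sq_nonneg _)
  nlinarith [Real.sq_sqrt (sub_nonneg.2 hba), Real.sqrt_nonneg (a - b), Real.sqrt_nonneg b]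

section EuclideanDotProduct

variable {m n : Type*} [Fintype m] [Fintype n]

theorem abs_dotProduct_le_norm_mul_norm (x y : n → ℝ) : |x ⬝ᵥ y| ≤ ‖toLp 2 x‖ * ‖toLp 2 y‖ := by
  simpa [EuclideanSpace.inner_toLp_toLp, dotProduct_comm] using
    abs_real_inner_le_norm (toLp 2 x) (toLp 2 y)

theorem norm_toLp_sq_eq_dotProduct (x : n → ℝ) : ‖toLp 2 x‖ ^ 2 = x ⬝ᵥ x := by
  rw [← real_inner_self_eq_norm_sq, EuclideanSpace.inner_toLp_toLp]
  simp

theorem Matrix.frobenius_norm_mulVec_le (A : Matrix m n ℝ) (x : n → ℝ) :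
    ‖toLp 2 (A *ᵥ x)‖ ≤ ‖A‖ * ‖toLp 2 x‖ := by
  rw [← frobenius_norm_replicateCol (ι := Unit), ← frobenius_norm_replicateCol (ι := Unit) x,
    replicateCol_mulVec]
  exact frobenius_norm_mul _ _

theorem Matrix.abs_dotProduct_mulVec_le (A : Matrix n n ℝ) (x : n → ℝ) :
    |x ⬝ᵥ (A *ᵥ x)| ≤ ‖A‖ * ‖toLp 2 x‖ ^ 2 :=
  calc |x ⬝ᵥ (A *ᵥ x)| ≤ ‖toLp 2 x‖ * ‖toLp 2 (A *ᵥ x)‖ := abs_dotProduct_le_norm_mul_norm _ _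
    _ ≤ ‖toLp 2 x‖ * (‖A‖ * ‖toLp 2 x‖) := by gcongr; exact A.frobenius_norm_mulVec_le x
    _ = ‖A‖ * ‖toLp 2 x‖ ^ 2 := by ring

theorem Matrix.frobenius_norm_sq_le_of_norm_mulVec_le [DecidableEq n] (A : Matrix m n ℝ) {c : ℝ}
    (h : ∀ x, ‖toLp 2 (A *ᵥ x)‖ ≤ c * ‖toLp 2 x‖) : ‖A‖ ^ 2 ≤ Fintype.card n * c ^ 2 := by
  have hcol : ∀ j, ‖toLp 2 (Aᵀ j)‖ ^ 2 ≤ c ^ 2 := fun j => by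
    have hj := h (Pi.single j 1)
    rw [mulVec_single_one, PiLp.toLp_single, PiLp.norm_single, norm_one,
      mul_one] at hj
    exact pow_le_pow_left₀ (norm_nonneg _) hj 2
  calc ‖A‖ ^ 2 = ‖Aᵀ‖ ^ 2 := by rw [frobenius_norm_transpose]
    _ = ∑ j, ‖toLp 2 (Aᵀ j)‖ ^ 2 := PiLp.norm_sq_eq_of_L2 _ (toLp 2 fun j => toLp 2 (Aᵀ j))
    _ ≤ ∑ _j : n, c ^ 2 := Finset.sum_le_sum fun j _ => hcol j
    _ = Fintype.card n * c ^ 2 := by simp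

end EuclideanDotProduct

section Coercive

variable {n : Type*} [Fintype n] [DecidableEq n] {Λ : Matrix n n ℝ} {lam : ℝ}

theorem Matrix.isUnit_det_of_coercive (hlam : 0 < lam)
    (hΛ : ∀ x, lam * (x ⬝ᵥ x) ≤ x ⬝ᵥ (Λ *ᵥ x)) : IsUnit Λ.det := by
  rw [isUnit_iff_ne_zero, Ne, ← exists_mulVec_eq_zero_iff]
  rintro ⟨x, hx0, hx⟩
  have hxx : lam * (x ⬝ᵥ x) ≤ 0 := by simpa [hx] using hΛ x
  exact hx0 (dotProduct_self_eq_zero.1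
    (le_antisymm (nonpos_of_mul_nonpos_right hxx hlam) (dotProduct_self_star_nonneg x)))

theorem Matrix.norm_nonsing_inv_mulVec_le_of_coercive (hlam : 0 < lam)
    (hΛ : ∀ x, lam * (x ⬝ᵥ x) ≤ x ⬝ᵥ (Λ *ᵥ x)) (x : n → ℝ) :
    ‖toLp 2 (Λ⁻¹ *ᵥ x)‖ ≤ lam⁻¹ * ‖toLp 2 x‖ := by
  set y := Λ⁻¹ *ᵥ x
  have hy : Λ *ᵥ y = x := by
    rw [mulVec_mulVec, mul_nonsing_inv _ (isUnit_det_of_coercive hlam hΛ), one_mulVec]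
  have key : lam * ‖toLp 2 y‖ ^ 2 ≤ ‖toLp 2 y‖ * ‖toLp 2 x‖ :=
    calc lam * ‖toLp 2 y‖ ^ 2 = lam * (y ⬝ᵥ y) := by rw [norm_toLp_sq_eq_dotProduct]
      _ ≤ y ⬝ᵥ x := hy ▸ hΛ y
      _ ≤ ‖toLp 2 y‖ * ‖toLp 2 x‖ := (le_abs_self _).trans (abs_dotProduct_le_norm_mul_norm _ _)
  rw [le_inv_mul_iff₀ hlam]
  rcases (norm_nonneg (toLp 2 y)).eq_or_lt with hy0 | hy0
  · rw [← hy0, mul_zero]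
    exact norm_nonneg _
  · nlinarith

theorem Matrix.frobenius_norm_nonsing_inv_le_of_coercive (hlam : 0 < lam)
    (hΛ : ∀ x, lam * (x ⬝ᵥ x) ≤ x ⬝ᵥ (Λ *ᵥ x)) : ‖Λ⁻¹‖ ≤ √(Fintype.card n) / lam := by
  have h := Λ⁻¹.frobenius_norm_sq_le_of_norm_mulVec_le
    (norm_nonsing_inv_mulVec_le_of_coercive hlam hΛ)
  rw [← pow_le_pow_iff_left₀ (norm_nonneg _) (by positivity) two_ne_zero, div_pow,
    Real.sq_sqrt (Nat.cast_nonneg _)]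
  simpa [div_eq_mul_inv] using h

end Coercive

noncomputable def optimisticQ {S A n : Type*} [Fintype n] (φ : S → A → n → ℝ) (M : ℝ)
    (w : n → ℝ) (v : ℝ) (Γ : Matrix n n ℝ) (s : S) (a : A) : ℝ :=
  min (w ⬝ᵥ φ s a + v + √(φ s a ⬝ᵥ (Γ *ᵥ φ s a))) M

theorem optimisticQ_smul_nonsing_inv {S A n : Type*} [Fintype n] [DecidableEq n]
    {φ : S → A → n → ℝ} {M : ℝ} {w : n → ℝ} {v β : ℝ} (hβ : 0 ≤ β) (Λ : Matrix n n ℝ) (s : S)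
    (a : A) : optimisticQ φ M w v (β ^ 2 • Λ⁻¹) s a =
      min (w ⬝ᵥ φ s a + v + β * √(φ s a ⬝ᵥ (Λ⁻¹ *ᵥ φ s a))) M := by
  rw [optimisticQ, smul_mulVec, dotProduct_smul, smul_eq_mul, Real.sqrt_mul (sq_nonneg β),
    Real.sqrt_sq hβ]

theorem abs_optimisticQ_sub_le {S A n : Type*} [Fintype n] {φ : S → A → n → ℝ} {s : S} {a : A}
    (hφ : ‖toLp 2 (φ s a)‖ ≤ 1) (M : ℝ) (w w' : n → ℝ) (v v' : ℝ) (Γ Γ' : Matrix n n ℝ) :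
    |optimisticQ φ M w v Γ s a - optimisticQ φ M w' v' Γ' s a| ≤
      ‖toLp 2 (w - w')‖ + |v - v'| + √‖Γ - Γ'‖ := by
  set x := φ s a
  have hw : |w ⬝ᵥ x - w' ⬝ᵥ x| ≤ ‖toLp 2 (w - w')‖ := by
    rw [← sub_dotProduct]
    exact (abs_dotProduct_le_norm_mul_norm _ _).trans (mul_le_of_le_one_right (norm_nonneg _) hφ)
  have hΓ : |√(x ⬝ᵥ (Γ *ᵥ x)) - √(x ⬝ᵥ (Γ' *ᵥ x))| ≤ √‖Γ - Γ'‖ := by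
    refine (Real.abs_sqrt_sub_sqrt_le _ _).trans (Real.sqrt_le_sqrt ?_)
    rw [← dotProduct_sub, ← sub_mulVec]
    exact ((Γ - Γ').abs_dotProduct_mulVec_le x).trans
      (mul_le_of_le_one_right (norm_nonneg _) (pow_le_one₀ (norm_nonneg _) hφ))
  calc _ ≤ max |(w ⬝ᵥ x + v + √(x ⬝ᵥ (Γ *ᵥ x))) - (w' ⬝ᵥ x + v' + √(x ⬝ᵥ (Γ' *ᵥ x)))| |M - M| :=
        abs_min_sub_min_le_max _ _ _ _
    _ = |(w ⬝ᵥ x - w' ⬝ᵥ x) + (v - v') + (√(x ⬝ᵥ (Γ *ᵥ x)) - √(x ⬝ᵥ (Γ' *ᵥ x)))| := by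
        rw [sub_self, abs_zero, max_eq_left (abs_nonneg _)]
        ring_nf
    _ ≤ _ := (abs_add_three _ _ _).trans (by gcongr)

section Covering

variable {E : Type*} [NormedAddCommGroup E] [NormedSpace ℝ E] [FiniteDimensional ℝ E]

/-- Volume argument: the balls of radius `r / 2` around the points of `P` are disjoint and lie in
the ball of radius `R + r / 2`. -/
theorem card_le_of_isSeparated_of_subset_closedBall {R : ℝ} (hR : 0 ≤ R) {r : ℝ≥0} (hr : 0 < r)
    {P : Finset E} (hPR : (P : Set E) ⊆ closedBall 0 R) (hP : IsSeparated (r : ℝ≥0∞) (P : Set E)) :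
    (P.card : ℝ) ≤ (1 + 2 * R / r) ^ Module.finrank ℝ E := by
  borelize E
  set μ : Measure E := Measure.addHaar
  have hr' : (0 : ℝ) < r := hr
  have hdisj : (P : Set E).PairwiseDisjoint fun p => ball p (r / 2) := fun p hp q hq hpq => by
    have hpq' : (r : ℝ) < dist p q := by
      have : (r : ℝ≥0∞) < edist p q := hP hp hq hpq
      rwa [edist_nndist, ENNReal.coe_lt_coe, ← NNReal.coe_lt_coe, coe_nndist] at this
    exact ball_disjoint_ball (by linarith)
  have hsub : (⋃ p ∈ P, ball p (r / 2)) ⊆ ball (0 : E) (R + r / 2) := by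
    simp only [Set.iUnion_subset_iff]
    intro p hp x hx
    have := mem_closedBall_zero_iff.1 (hPR hp)
    rw [mem_ball_zero_iff]
    linarith [norm_le_norm_add_norm_sub' x p, mem_ball_iff_norm.1 hx]
  have hvol : (P.card : ℝ≥0∞) * μ (ball 0 (r / 2)) ≤ μ (ball 0 (R + r / 2)) :=
    calc (P.card : ℝ≥0∞) * μ (ball 0 (r / 2)) = ∑ p ∈ P, μ (ball p (r / 2)) := by
          simp [Measure.addHaar_ball_center]
      _ = μ (⋃ p ∈ P, ball p (r / 2)) :=
          (measure_biUnion_finset hdisj fun _ _ => measurableSet_ball).symm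
      _ ≤ μ (ball 0 (R + r / 2)) := measure_mono hsub
  rw [Measure.addHaar_ball_of_pos μ _ (r := r / 2) (by positivity),
    Measure.addHaar_ball_of_pos μ _ (r := R + r / 2) (by positivity), ← mul_assoc,
    ENNReal.mul_le_mul_iff_left (measure_ball_pos μ _ one_pos).ne'
    measure_ball_lt_top.ne, ← ENNReal.ofReal_natCast, ← ENNReal.ofReal_mul (by positivity),
    ENNReal.ofReal_le_ofReal_iff (by positivity)] at hvol
  rwa [show 1 + 2 * R / r = (R + r / 2) / (r / 2) by field_simp; ring, div_pow,
    le_div_iff₀ (by positivity)]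

theorem packingNumber_closedBall_le {R : ℝ} (hR : 0 ≤ R) {r : ℝ≥0} (hr : 0 < r) :
    packingNumber r (closedBall (0 : E) R) ≤ ⌊(1 + 2 * R / r) ^ Module.finrank ℝ E⌋₊ := by
  refine iSup₂_le fun C hC => iSup_le fun hsep => ?_
  by_contra! hlt
  obtain ⟨t, htC, ht⟩ := Set.exists_subset_encard_eq (Order.add_one_le_of_lt hlt)
  have htfin : t.Finite := Set.finite_of_encard_eq_coe ht
  have hcard : htfin.toFinset.card = ⌊(1 + 2 * R / r) ^ Module.finrank ℝ E⌋₊ + 1 := by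
    exact_mod_cast htfin.encard_eq_coe_toFinset_card.symm.trans ht
  have := card_le_of_isSeparated_of_subset_closedBall hR hr (P := htfin.toFinset)
    (by simpa using htC.trans hC) (by simpa using hsep.subset htC)
  rw [hcard, Nat.cast_add_one] at this
  exact (Nat.lt_floor_add_one _).not_ge this

theorem exists_finset_cover_closedBall {R r : ℝ} (hR : 0 ≤ R) (hr : 0 < r) :
    ∃ P : Finset E, P.Nonempty ∧ (∀ x ∈ closedBall (0 : E) R, ∃ p ∈ P, dist x p ≤ r) ∧
      (P.card : ℝ) ≤ (1 + 2 * R / r) ^ Module.finrank ℝ E := by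
  lift r to ℝ≥0 using hr.le
  set N := maximalSeparatedSet r (closedBall (0 : E) R)
  have hpack := packingNumber_closedBall_le (E := E) hR (mod_cast hr)
  have hfin_pack : packingNumber r (closedBall (0 : E) R) ≠ ⊤ :=
    ne_top_of_le_ne_top (ENat.natCast_ne_top _) hpack
  have hN : N.Finite := Set.encard_ne_top_iff.1 (encard_maximalSeparatedSet hfin_pack ▸ hfin_pack)
  have hcover : ∀ x ∈ closedBall (0 : E) R, ∃ p ∈ hN.toFinset, dist x p ≤ r := fun x hx => by
    obtain ⟨p, hp, hxp⟩ := isCover_maximalSeparatedSet hfin_pack hx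
    exact ⟨p, hN.mem_toFinset.2 hp, dist_le_coe.2 (edist_le_coe.1 hxp)⟩
  refine ⟨hN.toFinset, ?_, hcover, ?_⟩
  · obtain ⟨p, hp, -⟩ := hcover 0 (mem_closedBall_self hR)
    exact ⟨p, hp⟩
  · have hcard : (hN.toFinset.card : ℕ∞) ≤ ⌊(1 + 2 * R / r) ^ Module.finrank ℝ E⌋₊ := by
      rw [← hN.encard_eq_coe_toFinset_card, encard_maximalSeparatedSet hfin_pack]
      exact hpack
    exact (Nat.cast_le.2 (mod_cast hcard)).trans (Nat.floor_le (by positivity))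

end Covering

theorem log_card_image_product_le {α β γ δ : Type*} [DecidableEq δ] (f : α × β × γ → δ)
    {P : Finset α} {Q : Finset β} {R : Finset γ} (hP : P.Nonempty) (hQ : Q.Nonempty)
    (hR : R.Nonempty) {a b c : ℝ} (ha : (P.card : ℝ) ≤ a) (hb : (Q.card : ℝ) ≤ b)
    (hc : (R.card : ℝ) ≤ c) :
    Real.log ((P ×ˢ Q ×ˢ R).image f).card ≤ Real.log a + Real.log b + Real.log c := by
  have ha0 : 0 < a := (Nat.cast_pos.2 hP.card_pos).trans_le ha
  have hb0 : 0 < b := (Nat.cast_pos.2 hQ.card_pos).trans_le hb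
  have hc0 : 0 < c := (Nat.cast_pos.2 hR.card_pos).trans_le hc
  have hcard : (((P ×ˢ Q ×ˢ R).image f).card : ℝ) ≤ P.card * Q.card * R.card := by
    rw [mul_assoc]
    exact_mod_cast Finset.card_image_le.trans_eq (by simp [Finset.card_product])
  have himage : (0 : ℝ) < ((P ×ˢ Q ×ˢ R).image f).card :=
    mod_cast ((hP.product (hQ.product hR)).image f).card_pos
  calc Real.log ((P ×ˢ Q ×ˢ R).image f).card ≤ Real.log (a * b * c) :=
        Real.log_le_log himage (hcard.trans (by gcongr))
    _ = Real.log a + Real.log b + Real.log c := by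
        rw [Real.log_mul (by positivity) hc0.ne', Real.log_mul ha0.ne' hb0.ne']

theorem exists_finset_optimisticQ_cover {S A n : Type*} [Fintype n] [DecidableEq n]
    {φ : S → A → n → ℝ} (hφ : ∀ s a, ‖toLp 2 (φ s a)‖ ≤ 1) (M : ℝ) {L D G ε : ℝ} (hL : 0 ≤ L)
    (hD : 0 ≤ D) (hG : 0 ≤ G) (hε : 0 < ε) :
    ∃ C : Finset (S → A → ℝ),
      (∀ w v Γ, ‖toLp 2 w‖ ≤ L → |v| ≤ D → ‖Γ‖ ≤ G →
        ∃ Q' ∈ C, ∀ s a, |optimisticQ φ M w v Γ s a - Q' s a| ≤ ε) ∧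
      Real.log C.card ≤ Fintype.card n * Real.log (1 + 8 * L / ε) + Real.log (1 + 8 * D / ε) +
        Fintype.card n ^ 2 * Real.log (1 + 8 * G / ε ^ 2) := by
  classical
  obtain ⟨Pw, hPw, hPw_cover, hPw_card⟩ :=
    exists_finset_cover_closedBall (E := EuclideanSpace ℝ n) hL (by positivity : 0 < ε / 4)
  obtain ⟨Pv, hPv, hPv_cover, hPv_card⟩ :=
    exists_finset_cover_closedBall (E := ℝ) hD (by positivity : 0 < ε / 4)
  obtain ⟨PΓ, hPΓ, hPΓ_cover, hPΓ_card⟩ :=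
    exists_finset_cover_closedBall (E := Matrix n n ℝ) hG (by positivity : 0 < (ε / 2) ^ 2)
  refine ⟨(Pw ×ˢ Pv ×ˢ PΓ).image fun p => optimisticQ φ M p.1.ofLp p.2.1 p.2.2, ?_, ?_⟩
  · intro w v Γ hw hv hΓ
    obtain ⟨w', hw'P, hw'⟩ := hPw_cover (toLp 2 w) (mem_closedBall_zero_iff.2 hw)
    obtain ⟨v', hv'P, hv'⟩ := hPv_cover v (mem_closedBall_zero_iff.2 hv)
    obtain ⟨Γ', hΓ'P, hΓ'⟩ := hPΓ_cover Γ (mem_closedBall_zero_iff.2 hΓ)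
    refine ⟨optimisticQ φ M w'.ofLp v' Γ',
      Finset.mem_image.2 ⟨(w', v', Γ'), by simp [hw'P, hv'P, hΓ'P], rfl⟩, fun s a => ?_⟩
    calc _ ≤ ‖toLp 2 (w - w'.ofLp)‖ + |v - v'| + √‖Γ - Γ'‖ :=
          abs_optimisticQ_sub_le (hφ s a) _ _ _ _ _ _ _
      _ ≤ ε / 4 + ε / 4 + √((ε / 2) ^ 2) := by
          rw [toLp_sub, toLp_ofLp, ← dist_eq_norm, ← Real.dist_eq, ← dist_eq_norm]
          gcongr
      _ = ε := by
          rw [Real.sqrt_sq (by positivity)]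
          ring
  · refine (log_card_image_product_le _ hPw hPv hPΓ (a := (1 + 8 * L / ε) ^ Fintype.card n)
      (b := 1 + 8 * D / ε) (c := (1 + 8 * G / ε ^ 2) ^ (Fintype.card n ^ 2)) ?_ ?_ ?_).trans_eq ?_
    · convert hPw_card using 2
      · ring
      · simp
    · convert hPv_card using 1
      rw [Module.finrank_self, pow_one]
      ring
    · convert hPΓ_card using 2
      · ring
      · simp [Module.finrank_matrix, sq]
    · rw [Real.log_pow, Real.log_pow]
      push_cast
      ring

theorem stmt_8_general {S A : Type*} (d : ℕ)
    (φ : S → A → Fin d → ℝ) (hφ : ∀ s a, Real.sqrt (∑ j, φ s a j ^ 2) ≤ 1)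
    (M L B D lam ε : ℝ) (hL : 0 < L) (hD : 0 < D)
    (hlam : 0 < lam) (hε : 0 < ε) :
    ∃ C : Finset (S → A → ℝ),
      (∀ Q : S → A → ℝ,
        (∃ (w : Fin d → ℝ) (β v : ℝ) (Λ : Matrix (Fin d) (Fin d) ℝ),
          Real.sqrt (∑ j, w j ^ 2) ≤ L ∧ β ∈ Set.Icc 0 B ∧ v ∈ Set.Icc 0 D ∧
          Λ.IsSymm ∧ (∀ x : Fin d → ℝ, lam * (x ⬝ᵥ x) ≤ x ⬝ᵥ (Λ *ᵥ x)) ∧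
          ∀ s a, Q s a =
            min (w ⬝ᵥ φ s a + v + β * Real.sqrt (φ s a ⬝ᵥ (Λ⁻¹ *ᵥ φ s a))) M) →
        ∃ Q' ∈ C, ∀ s a, |Q s a - Q' s a| ≤ ε) ∧
      Real.log C.card ≤ d * Real.log (1 + 8 * L / ε) + Real.log (1 + 8 * D / ε) +
        d ^ 2 * Real.log (1 + 8 * Real.sqrt d * B ^ 2 / (lam * ε ^ 2)) := by
  have hnorm : ∀ x : Fin d → ℝ, ‖toLp 2 x‖ = √(∑ j, x j ^ 2) := fun x => by
    simp [EuclideanSpace.norm_eq]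
  obtain ⟨C, hC_cover, hC_card⟩ := exists_finset_optimisticQ_cover
    (fun s a => (hnorm _).trans_le (hφ s a)) M hL.le hD.le (G := √d * B ^ 2 / lam)
    (by positivity) hε
  refine ⟨C, ?_, ?_⟩
  · rintro Q ⟨w, β, v, Λ, hw, hβ, hv, -, hΛ, hQ⟩
    have hΓ : ‖β ^ 2 • Λ⁻¹‖ ≤ √d * B ^ 2 / lam := by
      have hΛ_inv := Matrix.frobenius_norm_nonsing_inv_le_of_coercive hlam hΛ
      rw [Fintype.card_fin] at hΛ_inv
      rw [norm_smul, Real.norm_eq_abs, abs_of_nonneg (sq_nonneg β), mul_comm, mul_div_right_comm]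
      exact mul_le_mul hΛ_inv (pow_le_pow_left₀ hβ.1 hβ.2 2) (sq_nonneg β) (by positivity)
    obtain ⟨Q', hQ'C, hQQ'⟩ := hC_cover w v _ ((hnorm w).trans_le hw)
      ((abs_of_nonneg hv.1).trans_le hv.2) hΓ
    refine ⟨Q', hQ'C, fun s a => ?_⟩
    rw [hQ, ← optimisticQ_smul_nonsing_inv hβ.1]
    exact hQQ' s a
  · rw [Fintype.card_fin] at hC_card
    convert hC_card using 5
    ring

/-- Covering number of the class `𝒬` of optimistic action-value functions
`Q(s,a) = min(wᵀφ(s,a) + v + β√(φ(s,a)ᵀΛ⁻¹φ(s,a)), M)` with `‖w‖₂ ≤ L`, `β ∈ [0,B]`,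
`v ∈ [0,D]` and `Λ` symmetric positive definite with minimum eigenvalue at least `λ`
(expressed by the quadratic-form bound `λ‖x‖² ≤ xᵀΛx`): there is a sup-norm `ε`-cover `C`
with `log|C| ≤ d·log(1 + 8L/ε) + log(1 + 8D/ε) + d²·log(1 + 8√d·B²/(λε²))`. -/
theorem stmt_8 {S A : Type*} [Nonempty S] [Nonempty A] (d : ℕ) (hd : 1 ≤ d)
    (φ : S → A → Fin d → ℝ) (hφ : ∀ s a, Real.sqrt (∑ j, φ s a j ^ 2) ≤ 1)
    (M L B D lam ε : ℝ) (hM : 0 < M) (hL : 0 < L) (hB : 0 < B) (hD : 0 < D)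
    (hlam : 0 < lam) (hε : 0 < ε) :
    ∃ C : Finset (S → A → ℝ),
      (∀ Q : S → A → ℝ,
        (∃ (w : Fin d → ℝ) (β v : ℝ) (Λ : Matrix (Fin d) (Fin d) ℝ),
          Real.sqrt (∑ j, w j ^ 2) ≤ L ∧ β ∈ Set.Icc 0 B ∧ v ∈ Set.Icc 0 D ∧
          Λ.IsSymm ∧ (∀ x : Fin d → ℝ, lam * (x ⬝ᵥ x) ≤ x ⬝ᵥ (Λ *ᵥ x)) ∧
          ∀ s a, Q s a =
            min (w ⬝ᵥ φ s a + v + β * Real.sqrt (φ s a ⬝ᵥ (Λ⁻¹ *ᵥ φ s a))) M) →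
        ∃ Q' ∈ C, ∀ s a, |Q s a - Q' s a| ≤ ε) ∧
      Real.log C.card ≤ d * Real.log (1 + 8 * L / ε) + Real.log (1 + 8 * D / ε) +
        d ^ 2 * Real.log (1 + 8 * Real.sqrt d * B ^ 2 / (lam * ε ^ 2)) :=
  stmt_8_general d φ hφ M L B D lam ε hL hD hlam hε
end

section
/- Let w₁, w₂ ∈ ℝ^d, v₁, v₂ ∈ ℝ, M ∈ ℝ, and let A₁, A₂ be symmetric positive semidefinite d×d matrices. Then for every φ ∈ ℝ^d with ‖φ‖₂ ≤ 1, | min(w₁ᵀφ + v₁ + √(φᵀA₁φ), M) − min(w₂ᵀφ + v₂ + √(φᵀA₂φ), M) | ≤ ‖w₁ − w₂‖₂ + |v₁ − v₂| + √(‖A₁ − A₂‖_F), where ‖·‖_F denotes the Frobenius norm. -/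
/-!
Truncation at `M` is 1-Lipschitz, so it suffices to bound the three summands separately.
The linear part is controlled by Cauchy–Schwarz and `‖φ‖₂ ≤ 1`. For the bonus term,
`|√x − √y| ≤ √|x − y|` reduces it to `|φᵀ(A₁ − A₂)φ|`, and applying Cauchy–Schwarz row by row
shows that a quadratic form is bounded by the Frobenius norm times `‖φ‖₂²`.
-/

open Matrix Finset

namespace Real

lemma sqrt_le_sqrt_sub_add_sqrt {x y : ℝ} (h : y ≤ x) : √x ≤ √(x - y) + √y := by
  rcases le_or_gt 0 y with hy | hy
  · rw [sqrt_le_left (by positivity), add_sq, sq_sqrt (sub_nonneg.2 h), sq_sqrt hy]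
    nlinarith [sqrt_nonneg (x - y), sqrt_nonneg y]
  · rw [sqrt_eq_zero_of_nonpos hy.le, add_zero]
    exact sqrt_le_sqrt (by linarith)

lemma abs_sqrt_sub_sqrt_le_s10 (x y : ℝ) : |√x - √y| ≤ √|x - y| := by
  wlog h : y ≤ x generalizing x y
  · rw [abs_sub_comm, abs_sub_comm x]
    exact this y x (le_of_not_ge h)
  rw [abs_of_nonneg (sub_nonneg.2 (sqrt_le_sqrt h)), abs_of_nonneg (sub_nonneg.2 h),
    sub_le_iff_le_add]
  exact sqrt_le_sqrt_sub_add_sqrt h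

end Real

section CauchySchwarz

variable {m n : Type*} [Fintype m] [Fintype n]

lemma abs_dotProduct_le (u v : n → ℝ) :
    |u ⬝ᵥ v| ≤ √(∑ i, u i ^ 2) * √(∑ i, v i ^ 2) := by
  rw [← Real.sqrt_mul (sum_nonneg fun _ _ ↦ sq_nonneg _)]
  exact Real.abs_le_sqrt (sum_mul_sq_le_sq_mul_sq _ _ _)

lemma sum_sq_mulVec_le (A : Matrix m n ℝ) (φ : n → ℝ) :
    ∑ i, (A *ᵥ φ) i ^ 2 ≤ (∑ i, ∑ j, A i j ^ 2) * ∑ j, φ j ^ 2 := by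
  rw [sum_mul]
  exact sum_le_sum fun i _ ↦ sum_mul_sq_le_sq_mul_sq _ _ _

lemma abs_dotProduct_mulVec_le (A : Matrix m n ℝ) (ψ : m → ℝ) (φ : n → ℝ) :
    |ψ ⬝ᵥ (A *ᵥ φ)| ≤ √(∑ i, ψ i ^ 2) * √(∑ i, ∑ j, A i j ^ 2) * √(∑ j, φ j ^ 2) := by
  rw [mul_assoc, ← Real.sqrt_mul (x := ∑ i, ∑ j, A i j ^ 2) (by positivity)]
  exact (abs_dotProduct_le ψ _).trans
    (mul_le_mul_of_nonneg_left (Real.sqrt_le_sqrt (sum_sq_mulVec_le A φ)) (Real.sqrt_nonneg _))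

end CauchySchwarz

lemma abs_min_sub_min_le_abs_sub {α : Type*} [AddCommGroup α] [LinearOrder α]
    [IsOrderedAddMonoid α] (a b c : α) : |min a c - min b c| ≤ |a - b| := by
  simpa using abs_min_sub_min_le_max a c b c

theorem stmt_10_general (d : ℕ) (w1 w2 : Fin d → ℝ) (v1 v2 M : ℝ)
    (A1 A2 : Matrix (Fin d) (Fin d) ℝ)
    (φ : Fin d → ℝ) (hφ : Real.sqrt (∑ j, φ j ^ 2) ≤ 1) :
    |min (w1 ⬝ᵥ φ + v1 + Real.sqrt (φ ⬝ᵥ (A1 *ᵥ φ))) M -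
      min (w2 ⬝ᵥ φ + v2 + Real.sqrt (φ ⬝ᵥ (A2 *ᵥ φ))) M| ≤
    Real.sqrt (∑ j, (w1 j - w2 j) ^ 2) + |v1 - v2| +
      Real.sqrt (Real.sqrt (∑ i, ∑ j, (A1 i j - A2 i j) ^ 2)) := by
  have hw : |w1 ⬝ᵥ φ - w2 ⬝ᵥ φ| ≤ √(∑ j, (w1 j - w2 j) ^ 2) := by
    rw [← sub_dotProduct]
    exact (abs_dotProduct_le _ _).trans (mul_le_of_le_one_right (Real.sqrt_nonneg _) hφ)
  have hA : |φ ⬝ᵥ (A1 *ᵥ φ) - φ ⬝ᵥ (A2 *ᵥ φ)| ≤ √(∑ i, ∑ j, (A1 i j - A2 i j) ^ 2) := by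
    rw [← dotProduct_sub, ← sub_mulVec]
    calc _ ≤ √(∑ j, φ j ^ 2) * √(∑ i, ∑ j, (A1 - A2) i j ^ 2) * √(∑ j, φ j ^ 2) :=
          abs_dotProduct_mulVec_le _ _ _
      _ ≤ 1 * √(∑ i, ∑ j, (A1 i j - A2 i j) ^ 2) * 1 := by gcongr ?_ * _ * ?_
      _ = _ := by ring
  calc _ ≤ |(w1 ⬝ᵥ φ + v1 + √(φ ⬝ᵥ (A1 *ᵥ φ))) - (w2 ⬝ᵥ φ + v2 + √(φ ⬝ᵥ (A2 *ᵥ φ)))| :=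
        abs_min_sub_min_le_abs_sub _ _ _
    _ = |(w1 ⬝ᵥ φ - w2 ⬝ᵥ φ) + (v1 - v2) + (√(φ ⬝ᵥ (A1 *ᵥ φ)) - √(φ ⬝ᵥ (A2 *ᵥ φ)))| := by
        congr 1; ring
    _ ≤ |w1 ⬝ᵥ φ - w2 ⬝ᵥ φ| + |v1 - v2| + |√(φ ⬝ᵥ (A1 *ᵥ φ)) - √(φ ⬝ᵥ (A2 *ᵥ φ))| :=
        (abs_add_le _ _).trans (by gcongr; exact abs_add_le _ _)
    _ ≤ _ := by
        gcongr
        exact (Real.abs_sqrt_sub_sqrt_le_s10 _ _).trans (Real.sqrt_le_sqrt hA)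

/-- Key estimate for the covering-number bound: for `w₁, w₂ ∈ ℝ^d`, `v₁, v₂, M ∈ ℝ`,
symmetric positive semidefinite matrices `A₁, A₂`, and `‖φ‖₂ ≤ 1`,
`|min(w₁ᵀφ + v₁ + √(φᵀA₁φ), M) − min(w₂ᵀφ + v₂ + √(φᵀA₂φ), M)|
  ≤ ‖w₁ − w₂‖₂ + |v₁ − v₂| + √‖A₁ − A₂‖_F`. -/
theorem stmt_10 (d : ℕ) (w1 w2 : Fin d → ℝ) (v1 v2 M : ℝ)
    (A1 A2 : Matrix (Fin d) (Fin d) ℝ) (h1 : A1.PosSemidef) (h2 : A2.PosSemidef)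
    (φ : Fin d → ℝ) (hφ : Real.sqrt (∑ j, φ j ^ 2) ≤ 1) :
    |min (w1 ⬝ᵥ φ + v1 + Real.sqrt (φ ⬝ᵥ (A1 *ᵥ φ))) M -
      min (w2 ⬝ᵥ φ + v2 + Real.sqrt (φ ⬝ᵥ (A2 *ᵥ φ))) M| ≤
    Real.sqrt (∑ j, (w1 j - w2 j) ^ 2) + |v1 - v2| +
      Real.sqrt (Real.sqrt (∑ i, ∑ j, (A1 i j - A2 i j) ^ 2)) :=
  stmt_10_general d w1 w2 v1 v2 M A1 A2 φ hφ
end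

section
/- Let φ₁, φ₂, … be a sequence of vectors in ℝ^d with ‖φᵢ‖₂ ≤ 1 for all i ≥ 1. Let Λ₀ = I and Λₜ = I + Σᵢ₌₁ᵗ φᵢφᵢᵀ for t ≥ 1. Then for every t ≥ 1, Σᵢ₌₁ᵗ φᵢᵀ Λᵢ₋₁⁻¹ φᵢ ≤ 2·log det(Λₜ) ≤ 2d·log(1 + t). -/
/-!
By the matrix determinant lemma, appending `φₜ` multiplies `det Λₜ` by `1 + xₜ` with
`xₜ = φₜᵀ Λₜ⁻¹ φₜ`. Since `Λₜ ≥ I` and `‖φₜ‖ ≤ 1` we have `0 ≤ xₜ ≤ 1`, where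
`x ≤ 2 log (1 + x)`, so the potentials telescope into `2 log det Λₜ`. For the second bound,
Cauchy–Schwarz gives `vᵀ Λₜ v ≤ (1 + t) ‖v‖²`, so every eigenvalue of `Λₜ` is at most `1 + t`.
-/

open Matrix Finset

namespace Matrix

variable {n : Type*} [Fintype n]

theorem sq_dotProduct_le (u v : n → ℝ) : (u ⬝ᵥ v) ^ 2 ≤ (u ⬝ᵥ u) * (v ⬝ᵥ v) := by
  simpa only [dotProduct, sq] using sum_mul_sq_le_sq_mul_sq univ u v

theorem posSemidef_sum_vecMulVec_self {ι : Type*} (s : Finset ι) (u : ι → n → ℝ) :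
    (∑ k ∈ s, vecMulVec (u k) (u k)).PosSemidef :=
  posSemidef_sum s fun k _ => by simpa using posSemidef_vecMulVec_self_star (u k)

variable [DecidableEq n]

theorem det_add_vecMulVec {α : Type*} [CommRing α] {A : Matrix n n α} (hA : IsUnit A.det)
    (u v : n → α) : (A + vecMulVec u v).det = A.det * (1 + v ⬝ᵥ (A⁻¹ *ᵥ u)) := by
  rw [vecMulVec_eq Unit, det_add_replicateCol_mul_replicateRow hA]
  congr 1
  rw [Matrix.mul_assoc, ← replicateCol_mulVec, det_unique]
  simp [Matrix.one_apply_eq]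

theorem dotProduct_inv_one_add_mulVec_le {S : Matrix n n ℝ} (hS : S.PosSemidef) (v : n → ℝ) :
    v ⬝ᵥ ((1 + S)⁻¹ *ᵥ v) ≤ v ⬝ᵥ v := by
  set w := (1 + S)⁻¹ *ᵥ v
  have hv : (1 + S) *ᵥ w = v := by
    rw [mulVec_mulVec, mul_nonsing_inv _ (PosDef.one.add_posSemidef hS).det_pos.ne'.isUnit,
      one_mulVec]
  rw [add_mulVec, one_mulVec] at hv
  have hSw : 0 ≤ w ⬝ᵥ (S *ᵥ w) := by simpa using hS.dotProduct_mulVec_nonneg w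
  have hSwSw : 0 ≤ (S *ᵥ w) ⬝ᵥ (S *ᵥ w) := by simpa using dotProduct_star_self_nonneg (S *ᵥ w)
  -- `v ⬝ᵥ v - v ⬝ᵥ w = w ⬝ᵥ S w + ‖S w‖²`
  rw [← hv]
  simp only [add_dotProduct, dotProduct_add, dotProduct_comm (S *ᵥ w) w]
  linarith

theorem PosSemidef.det_le_pow_card {A : Matrix n n ℝ} (hA : A.PosSemidef) {c : ℝ}
    (h : ∀ v, v ⬝ᵥ (A *ᵥ v) ≤ c * (v ⬝ᵥ v)) : A.det ≤ c ^ Fintype.card n := by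
  have heig : ∀ i, hA.1.eigenvalues i ≤ c := fun i => by
    have hnorm : (hA.1.eigenvectorBasis i : n → ℝ) ⬝ᵥ hA.1.eigenvectorBasis i = 1 := by
      have h := hA.1.eigenvectorBasis.orthonormal.1 i
      rw [EuclideanSpace.norm_eq, Real.sqrt_eq_one] at h
      simpa [dotProduct, sq] using h
    simpa [hA.1.eigenvalues_eq i, hnorm] using h (hA.1.eigenvectorBasis i)
  calc A.det = ∏ i, hA.1.eigenvalues i := hA.1.det_eq_prod_eigenvalues
    _ ≤ ∏ _i : n, c := prod_le_prod (fun i _ => hA.eigenvalues_nonneg i) (fun i _ => heig i)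
    _ = c ^ Fintype.card n := by rw [prod_const, card_univ]

end Matrix

lemma le_two_mul_log_one_add {x : ℝ} (h0 : 0 ≤ x) (h1 : x ≤ 1) : x ≤ 2 * Real.log (1 + x) := by
  have := Real.one_sub_inv_le_log_of_pos (by linarith : 0 < 1 + x)
  have : x / 2 ≤ 1 - (1 + x)⁻¹ := by
    rw [le_sub_comm, inv_le_iff_one_le_mul₀ (by linarith)]
    nlinarith
  linarith

section RegularizedGram

variable {n : Type*} [DecidableEq n] (φ : ℕ → n → ℝ)

def regularizedGram (t : ℕ) : Matrix n n ℝ :=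
  1 + ∑ k ∈ range t, vecMulVec (φ k) (φ k)

theorem regularizedGram_succ (t : ℕ) :
    regularizedGram φ (t + 1) = regularizedGram φ t + vecMulVec (φ t) (φ t) := by
  rw [regularizedGram, regularizedGram, sum_range_succ, add_assoc]

variable [Fintype n]

theorem posDef_regularizedGram (t : ℕ) : (regularizedGram φ t).PosDef :=
  PosDef.one.add_posSemidef (posSemidef_sum_vecMulVec_self _ φ)

theorem dotProduct_regularizedGram_mulVec (t : ℕ) (v : n → ℝ) :
    v ⬝ᵥ (regularizedGram φ t *ᵥ v) = v ⬝ᵥ v + ∑ k ∈ range t, (φ k ⬝ᵥ v) ^ 2 := by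
  rw [regularizedGram, add_mulVec, one_mulVec, dotProduct_add, sum_mulVec, dotProduct_sum]
  simp only [vecMulVec_mulVec, op_smul_eq_smul, smul_dotProduct, smul_eq_mul, dotProduct_comm v,
    sq]

theorem det_regularizedGram_succ (t : ℕ) :
    (regularizedGram φ (t + 1)).det =
      (regularizedGram φ t).det * (1 + φ t ⬝ᵥ ((regularizedGram φ t)⁻¹ *ᵥ φ t)) := by
  rw [regularizedGram_succ, det_add_vecMulVec (posDef_regularizedGram φ t).det_pos.ne'.isUnit]

variable {φ}

theorem sum_dotProduct_inv_regularizedGram_mulVec_le (hφ : ∀ i, φ i ⬝ᵥ φ i ≤ 1) (t : ℕ) :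
    ∑ i ∈ range t, φ i ⬝ᵥ ((regularizedGram φ i)⁻¹ *ᵥ φ i) ≤
      2 * Real.log (regularizedGram φ t).det := by
  induction t with
  | zero => simp [regularizedGram]
  | succ t ih =>
    set x := φ t ⬝ᵥ ((regularizedGram φ t)⁻¹ *ᵥ φ t)
    have hx0 : 0 ≤ x := by
      simpa using (posDef_regularizedGram φ t).inv.posSemidef.dotProduct_mulVec_nonneg (φ t)
    have hx1 : x ≤ 1 :=
      (dotProduct_inv_one_add_mulVec_le (posSemidef_sum_vecMulVec_self _ φ) _).trans (hφ t)
    rw [sum_range_succ, det_regularizedGram_succ,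
      Real.log_mul (posDef_regularizedGram φ t).det_pos.ne' (by positivity)]
    linarith [le_two_mul_log_one_add hx0 hx1]

theorem det_regularizedGram_le (hφ : ∀ i, φ i ⬝ᵥ φ i ≤ 1) (t : ℕ) :
    (regularizedGram φ t).det ≤ (1 + t) ^ Fintype.card n := by
  refine (posDef_regularizedGram φ t).posSemidef.det_le_pow_card fun v => ?_
  have hv : 0 ≤ v ⬝ᵥ v := by simpa using dotProduct_star_self_nonneg v
  have hk : ∀ k, (φ k ⬝ᵥ v) ^ 2 ≤ v ⬝ᵥ v := fun k =>
    (sq_dotProduct_le _ _).trans (mul_le_of_le_one_left hv (hφ k))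
  calc v ⬝ᵥ (regularizedGram φ t *ᵥ v) = v ⬝ᵥ v + ∑ k ∈ range t, (φ k ⬝ᵥ v) ^ 2 :=
        dotProduct_regularizedGram_mulVec φ t v
    _ ≤ v ⬝ᵥ v + ∑ _k ∈ range t, v ⬝ᵥ v := by gcongr with k; exact hk k
    _ = (1 + t) * (v ⬝ᵥ v) := by simp; ring

end RegularizedGram

theorem stmt_11_general (d : ℕ) (φ : ℕ → Fin d → ℝ)
    (hφ : ∀ i, Real.sqrt (∑ j, φ i j ^ 2) ≤ 1) (t : ℕ) :
    (∑ i ∈ Finset.range t, φ i ⬝ᵥ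
        ((((1 : Matrix (Fin d) (Fin d) ℝ) +
            ∑ k ∈ Finset.range i, vecMulVec (φ k) (φ k))⁻¹) *ᵥ φ i)) ≤
      2 * Real.log ((1 : Matrix (Fin d) (Fin d) ℝ) +
          ∑ k ∈ Finset.range t, vecMulVec (φ k) (φ k)).det ∧
    2 * Real.log ((1 : Matrix (Fin d) (Fin d) ℝ) +
        ∑ k ∈ Finset.range t, vecMulVec (φ k) (φ k)).det ≤
      2 * d * Real.log (1 + t) := by
  have hφ_sq : ∀ i, φ i ⬝ᵥ φ i ≤ 1 := fun i => by simpa [dotProduct, sq] using hφ i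
  refine ⟨sum_dotProduct_inv_regularizedGram_mulVec_le hφ_sq t, ?_⟩
  have hlog := Real.log_le_log (posDef_regularizedGram φ t).det_pos (det_regularizedGram_le hφ_sq t)
  rw [Real.log_pow, Fintype.card_fin] at hlog
  change 2 * Real.log (regularizedGram φ t).det ≤ _
  linarith

/-- Elliptical potential lemma: for vectors `φ₁, φ₂, …` in `ℝ^d` with `‖φᵢ‖₂ ≤ 1`
(here `φ i` denotes `φ_{i+1}`, so `Λ t = I + Σ_{i<t} φᵢφᵢᵀ`), for every `t ≥ 1`,
`Σ_{i<t} φᵢᵀ Λᵢ⁻¹ φᵢ ≤ 2 log det(Λₜ) ≤ 2d log(1 + t)`. -/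
theorem stmt_11 (d : ℕ) (hd : 1 ≤ d) (φ : ℕ → Fin d → ℝ)
    (hφ : ∀ i, Real.sqrt (∑ j, φ i j ^ 2) ≤ 1) (t : ℕ) (ht : 1 ≤ t) :
    (∑ i ∈ Finset.range t, φ i ⬝ᵥ
        ((((1 : Matrix (Fin d) (Fin d) ℝ) +
            ∑ k ∈ Finset.range i, vecMulVec (φ k) (φ k))⁻¹) *ᵥ φ i)) ≤
      2 * Real.log ((1 : Matrix (Fin d) (Fin d) ℝ) +
          ∑ k ∈ Finset.range t, vecMulVec (φ k) (φ k)).det ∧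
    2 * Real.log ((1 : Matrix (Fin d) (Fin d) ℝ) +
        ∑ k ∈ Finset.range t, vecMulVec (φ k) (φ k)).det ≤
      2 * d * Real.log (1 + t) :=
  stmt_11_general d φ hφ t
end

section
/- Let S be a measurable space, A a nonempty finite set, P a Markov kernel from S × A to S, and r : S × A → [0, 1] a measurable reward function; for a bounded measurable f : S → ℝ write [Pf](s,a) = ∫_S f(s') P(ds' | s, a). Suppose there exist a constant J* ∈ ℝ and a bounded measurable function v* : S → ℝ satisfying the average-reward Bellman optimality equation J* + v*(s) = max_{a∈A} ( r(s,a) + [Pv*](s,a) ) for all s ∈ S. Let γ ∈ [0, 1) and suppose V : S → ℝ is a bounded measurable function satisfying the discounted Bellman optimality equation V(s) = max_{a∈A} ( r(s,a) + γ[PV](s,a) ) for all s ∈ S. Then sp(V) ≤ 2·sp(v*), where sp(f) = sup_{s} f(s) − inf_{s} f(s). -/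
open MeasureTheory ProbabilityTheory

/-!
Write `D = V - v`. Comparing the two Bellman equations at a maximizing action of one of them,
the rewards cancel and `V s - v s - J` is squeezed between values of
`γ ∫ V - ∫ v = γ ∫ D - (1 - γ) ∫ v`. Bounding the integrals by the extrema of `D` and `v` gives
`(1 - γ) sup D ≤ J - (1 - γ) inf v` and `J - (1 - γ) sup v ≤ (1 - γ) inf D`, so
`sp(D) ≤ sp(v)`, and `sp(V) ≤ sp(D) + sp(v) ≤ 2 sp(v)`.
-/

section Sup'

variable {ι α : Type*} [AddCommGroup α] [LinearOrder α] [IsOrderedAddMonoid α]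
  {s : Finset ι} (H : s.Nonempty) (f g : ι → α)

theorem Finset.exists_sup'_sub_sup'_le : ∃ i ∈ s, s.sup' H f - s.sup' H g ≤ f i - g i := by
  obtain ⟨i, hi, hfi⟩ := s.exists_mem_eq_sup' H f
  exact ⟨i, hi, hfi ▸ sub_le_sub_left (s.le_sup' g hi) _⟩

theorem Finset.exists_le_sup'_sub_sup' : ∃ i ∈ s, f i - g i ≤ s.sup' H f - s.sup' H g := by
  obtain ⟨i, hi, hgi⟩ := s.exists_mem_eq_sup' H g
  exact ⟨i, hi, hgi ▸ sub_le_sub_right (s.le_sup' f hi) _⟩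

end Sup'

section Integral

variable {S : Type*} [MeasurableSpace S] {μ : Measure S}

theorem integrable_of_abs_le [IsFiniteMeasure μ] {g : S → ℝ} {C : ℝ} (hg : Measurable g)
    (hgC : ∀ x, |g x| ≤ C) : Integrable g μ :=
  .of_bound hg.aestronglyMeasurable C (ae_of_all _ hgC)

variable [IsProbabilityMeasure μ]

theorem integral_le_ciSup {g : S → ℝ} (hg : Integrable g μ) (hb : BddAbove (Set.range g)) :
    ∫ x, g x ∂μ ≤ ⨆ x, g x := by
  simpa using integral_mono hg (integrable_const _) (le_ciSup hb)

theorem ciInf_le_integral {g : S → ℝ} (hg : Integrable g μ) (hb : BddBelow (Set.range g)) :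
    ⨅ x, g x ≤ ∫ x, g x ∂μ := by
  simpa using integral_mono (integrable_const _) hg (ciInf_le hb)

variable {f g : S → ℝ} {γ : ℝ}

theorem mul_integral_sub_integral_le (hγ0 : 0 ≤ γ) (hγ1 : γ ≤ 1) (hf : Integrable f μ)
    (hg : Integrable g μ) (hfg : BddAbove (Set.range fun x => f x - g x))
    (hgb : BddBelow (Set.range g)) :
    γ * ∫ x, f x ∂μ - ∫ x, g x ∂μ ≤ γ * (⨆ x, f x - g x) - (1 - γ) * ⨅ x, g x := by
  have hD := integral_le_ciSup (g := fun x => f x - g x) (hf.sub hg) hfg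
  have hg' := ciInf_le_integral hg hgb
  rw [integral_sub hf hg] at hD
  linarith [mul_le_mul_of_nonneg_left hD hγ0, mul_le_mul_of_nonneg_left hg' (sub_nonneg.2 hγ1)]

theorem le_mul_integral_sub_integral (hγ0 : 0 ≤ γ) (hγ1 : γ ≤ 1) (hf : Integrable f μ)
    (hg : Integrable g μ) (hfg : BddBelow (Set.range fun x => f x - g x))
    (hgb : BddAbove (Set.range g)) :
    γ * (⨅ x, f x - g x) - (1 - γ) * ⨆ x, g x ≤ γ * ∫ x, f x ∂μ - ∫ x, g x ∂μ := by
  have hD := ciInf_le_integral (g := fun x => f x - g x) (hf.sub hg) hfg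
  have hg' := integral_le_ciSup hg hgb
  rw [integral_sub hf hg] at hD
  linarith [mul_le_mul_of_nonneg_left hD hγ0, mul_le_mul_of_nonneg_left hg' (sub_nonneg.2 hγ1)]

end Integral

theorem bddAbove_range_of_abs_le {S : Type*} {g : S → ℝ} {C : ℝ} (h : ∀ x, |g x| ≤ C) :
    BddAbove (Set.range g) :=
  ⟨C, Set.forall_mem_range.2 fun x => (abs_le.1 (h x)).2⟩

theorem bddBelow_range_of_abs_le {S : Type*} {g : S → ℝ} {C : ℝ} (h : ∀ x, |g x| ≤ C) :
    BddBelow (Set.range g) :=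
  ⟨-C, Set.forall_mem_range.2 fun x => (abs_le.1 (h x)).1⟩

section Bellman

variable {S A : Type*} [MeasurableSpace S] [MeasurableSpace A] [Fintype A] [Nonempty A]
  {P : Kernel (S × A) S} {r : S → A → ℝ} {J γ : ℝ} {v V : S → ℝ}

theorem exists_action_sub_le_of_bellman
    (hbell : ∀ s, J + v s = Finset.univ.sup' Finset.univ_nonempty
      (fun a => r s a + ∫ s', v s' ∂(P (s, a))))
    (hbellV : ∀ s, V s = Finset.univ.sup' Finset.univ_nonempty
      (fun a => r s a + γ * ∫ s', V s' ∂(P (s, a)))) (s : S) :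
    ∃ a, V s - (J + v s) ≤ γ * ∫ s', V s' ∂(P (s, a)) - ∫ s', v s' ∂(P (s, a)) := by
  obtain ⟨a, -, ha⟩ := Finset.exists_sup'_sub_sup'_le Finset.univ_nonempty
    (fun a => r s a + γ * ∫ s', V s' ∂(P (s, a))) (fun a => r s a + ∫ s', v s' ∂(P (s, a)))
  exact ⟨a, by rw [hbell, hbellV]; linarith⟩

theorem exists_action_le_sub_of_bellman
    (hbell : ∀ s, J + v s = Finset.univ.sup' Finset.univ_nonempty
      (fun a => r s a + ∫ s', v s' ∂(P (s, a))))
    (hbellV : ∀ s, V s = Finset.univ.sup' Finset.univ_nonempty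
      (fun a => r s a + γ * ∫ s', V s' ∂(P (s, a)))) (s : S) :
    ∃ a, γ * ∫ s', V s' ∂(P (s, a)) - ∫ s', v s' ∂(P (s, a)) ≤ V s - (J + v s) := by
  obtain ⟨a, -, ha⟩ := Finset.exists_le_sup'_sub_sup' Finset.univ_nonempty
    (fun a => r s a + γ * ∫ s', V s' ∂(P (s, a))) (fun a => r s a + ∫ s', v s' ∂(P (s, a)))
  exact ⟨a, by rw [hbell, hbellV]; linarith⟩

end Bellman

theorem stmt_12_general {S A : Type*} [MeasurableSpace S] [Nonempty S]
    [MeasurableSpace A] [Fintype A] [Nonempty A]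
    (P : Kernel (S × A) S) [IsMarkovKernel P]
    (r : S → A → ℝ)
    (J : ℝ) (v : S → ℝ) (hv : Measurable v) (Cv : ℝ) (hvb : ∀ s, |v s| ≤ Cv)
    (hbell : ∀ s, J + v s = Finset.univ.sup' Finset.univ_nonempty
      (fun a => r s a + ∫ s', v s' ∂(P (s, a))))
    (γ : ℝ) (hγ : γ ∈ Set.Ico (0 : ℝ) 1)
    (V : S → ℝ) (hV : Measurable V) (CV : ℝ) (hVb : ∀ s, |V s| ≤ CV)
    (hbellV : ∀ s, V s = Finset.univ.sup' Finset.univ_nonempty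
      (fun a => r s a + γ * ∫ s', V s' ∂(P (s, a)))) :
    (⨆ s, V s) - (⨅ s, V s) ≤ 2 * ((⨆ s, v s) - (⨅ s, v s)) := by
  obtain ⟨hγ0, hγ1⟩ := hγ
  have hDb : ∀ s, |V s - v s| ≤ CV + Cv := fun s =>
    (abs_sub _ _).trans (add_le_add (hVb s) (hvb s))
  have hVi p : Integrable V (P p) := integrable_of_abs_le hV hVb
  have hvi p : Integrable v (P p) := integrable_of_abs_le hv hvb
  have hsupD : (1 - γ) * (⨆ s, V s - v s) ≤ J - (1 - γ) * ⨅ s, v s := by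
    have : (⨆ s, V s - v s) ≤ γ * (⨆ s, V s - v s) + J - (1 - γ) * ⨅ s, v s :=
      ciSup_le fun s => by
        obtain ⟨a, ha⟩ := exists_action_sub_le_of_bellman hbell hbellV s
        linarith [mul_integral_sub_integral_le hγ0 hγ1.le (hVi (s, a)) (hvi (s, a))
          (bddAbove_range_of_abs_le hDb) (bddBelow_range_of_abs_le hvb)]
    linarith
  have hinfD : J - (1 - γ) * (⨆ s, v s) ≤ (1 - γ) * ⨅ s, V s - v s := by
    have : γ * (⨅ s, V s - v s) + J - (1 - γ) * (⨆ s, v s) ≤ ⨅ s, V s - v s :=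
      le_ciInf fun s => by
        obtain ⟨a, ha⟩ := exists_action_le_sub_of_bellman hbell hbellV s
        linarith [le_mul_integral_sub_integral hγ0 hγ1.le (hVi (s, a)) (hvi (s, a))
          (bddBelow_range_of_abs_le hDb) (bddAbove_range_of_abs_le hvb)]
    linarith
  have hspD : (⨆ s, V s - v s) - (⨅ s, V s - v s) ≤ (⨆ s, v s) - ⨅ s, v s :=
    le_of_mul_le_mul_left (by linarith) (sub_pos.2 hγ1)
  have hsupV : (⨆ s, V s) ≤ (⨆ s, V s - v s) + ⨆ s, v s := ciSup_le fun s => by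
    linarith [le_ciSup (bddAbove_range_of_abs_le hDb) s, le_ciSup (bddAbove_range_of_abs_le hvb) s]
  have hinfV : (⨅ s, V s - v s) + (⨅ s, v s) ≤ ⨅ s, V s := le_ciInf fun s => by
    linarith [ciInf_le (bddBelow_range_of_abs_le hDb) s, ciInf_le (bddBelow_range_of_abs_le hvb) s]
  linarith

/-- Span bound (Lemma 2(i) of Wei et al. 2020): if `(J*, v*)` solves the average-reward
Bellman optimality equation `J* + v*(s) = max_a (r(s,a) + [Pv*](s,a))` and `V` solves the
`γ`-discounted Bellman optimality equation `V(s) = max_a (r(s,a) + γ[PV](s,a))` for a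
Markov kernel `P` and rewards `r ∈ [0,1]`, then `sp(V) ≤ 2·sp(v*)`, where
`sp(f) = sup_s f(s) − inf_s f(s)`. -/
theorem stmt_12 {S A : Type*} [MeasurableSpace S] [Nonempty S]
    [MeasurableSpace A] [Fintype A] [Nonempty A]
    (P : Kernel (S × A) S) [IsMarkovKernel P]
    (r : S → A → ℝ) (hr : ∀ s a, r s a ∈ Set.Icc (0 : ℝ) 1)
    (hrm : Measurable fun p : S × A => r p.1 p.2)
    (J : ℝ) (v : S → ℝ) (hv : Measurable v) (Cv : ℝ) (hvb : ∀ s, |v s| ≤ Cv)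
    (hbell : ∀ s, J + v s = Finset.univ.sup' Finset.univ_nonempty
      (fun a => r s a + ∫ s', v s' ∂(P (s, a))))
    (γ : ℝ) (hγ : γ ∈ Set.Ico (0 : ℝ) 1)
    (V : S → ℝ) (hV : Measurable V) (CV : ℝ) (hVb : ∀ s, |V s| ≤ CV)
    (hbellV : ∀ s, V s = Finset.univ.sup' Finset.univ_nonempty
      (fun a => r s a + γ * ∫ s', V s' ∂(P (s, a)))) :
    (⨆ s, V s) - (⨅ s, V s) ≤ 2 * ((⨆ s, v s) - (⨅ s, v s)) :=
  stmt_12_general P r J v hv Cv hvb hbell γ hγ V hV CV hVb hbellV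
end
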